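/- Every finite simple 2-degenerate graph is near-bipartite: its vertex set can be partitioned into an independent set I and a set F inducing a forest. -/

import Mathlib

def Degenerate {V : Type*} [DecidableEq V] (k : ℕ) (G : SimpleGraph V)
    [DecidableRel G.Adj] : Prop :=
  ∀ s : Finset V, s.Nonempty → ∃ v ∈ s, (s.filter fun u => G.Adj v u).card ≤ k

def NearBipartite {V : Type*} (G : SimpleGraph V) : Prop :=
  ∃ I : Set V, (∀ ⦃u v : V⦄, u ∈ I → v ∈ I → ¬ G.Adj u v) ∧ (G.induce Iᶜ).IsAcyclic

/-!
Peel off a vertex `v` with at most two neighbours and split the rest inductively into an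
independent set `I` and a forest part. If `v` has a neighbour in `I`, it has at most one
neighbour in the forest part, and a vertex with at most one neighbour lies on no cycle, so `v`
can join the forest. Otherwise `v` joins `I`.
-/

namespace SimpleGraph

variable {V : Type*} {G : SimpleGraph V}

theorem isAcyclic_induce_iff {s : Set V} :
    (G.induce s).IsAcyclic ↔ ∀ ⦃u : V⦄ (c : G.Walk u u), c.IsCycle → ∃ x ∈ c.support, x ∉ s := by
  have hinj : Function.Injective (Embedding.induce (G := G) s).toHom :=
    (Embedding.induce (G := G) s).injective
  constructor
  · intro hs u c hc
    by_contra! hsupp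
    refine hs (c.induce s hsupp) ?_
    rw [← Walk.isCycle_map_iff_of_injective hinj, Walk.map_induce]
    exact hc
  · intro h u c hc
    obtain ⟨x, hx, hxs⟩ := h _ ((Walk.isCycle_map_iff_of_injective hinj).mpr hc)
    rw [Walk.support_map, List.mem_map] at hx
    obtain ⟨z, -, rfl⟩ := hx
    exact hxs z.2

theorem Walk.IsCycle.exists_adj_ne {v : V} {c : G.Walk v v} (hc : c.IsCycle) :
    ∃ a ∈ c.support, ∃ b ∈ c.support, a ≠ b ∧ G.Adj v a ∧ G.Adj v b :=
  ⟨c.snd, c.getVert_mem_support _, c.penultimate, c.getVert_mem_support _,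
    hc.snd_ne_penultimate, c.adj_snd hc.not_nil, (c.adj_penultimate hc.not_nil).symm⟩

theorem isAcyclic_induce_insert {s : Set V} {v : V} (hs : (G.induce s).IsAcyclic)
    (hv : (G.neighborSet v ∩ s).Subsingleton) : (G.induce (insert v s)).IsAcyclic := by
  classical
  rw [isAcyclic_induce_iff] at hs ⊢
  intro u c hc
  by_contra! hsupp
  by_cases hvc : v ∈ c.support
  · obtain ⟨a, ha, b, hb, hab, hva, hvb⟩ := (hc.rotate hvc).exists_adj_ne
    rw [Walk.mem_support_rotate_iff] at ha hb
    have mem_s {x} (hx : x ∈ c.support) (hvx : G.Adj v x) : x ∈ s :=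
      (hsupp x hx).resolve_left hvx.ne'
    exact hab (hv ⟨hva, mem_s ha hva⟩ ⟨hvb, mem_s hb hvb⟩)
  · obtain ⟨x, hx, hxs⟩ := hs c hc
    exact hxs ((hsupp x hx).resolve_left (ne_of_mem_of_not_mem hx hvc))

theorem subsingleton_neighborSet_inter_of_card_le_two [DecidableRel G.Adj] {s : Finset V}
    {t : Set V} {v w : V} (hcard : (s.filter fun u => G.Adj v u).card ≤ 2) (hts : t ⊆ s)
    (hw : w ∈ s) (hwt : w ∉ t) (hvw : G.Adj v w) : (G.neighborSet v ∩ t).Subsingleton := by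
  intro a ⟨hva, hat⟩ b ⟨hvb, hbt⟩
  by_contra hab
  have : 2 < (s.filter fun u => G.Adj v u).card :=
    Finset.two_lt_card.mpr ⟨w, Finset.mem_filter.mpr ⟨hw, hvw⟩, a,
      Finset.mem_filter.mpr ⟨hts hat, hva⟩, b, Finset.mem_filter.mpr ⟨hts hbt, hvb⟩,
      (ne_of_mem_of_not_mem hat hwt).symm, (ne_of_mem_of_not_mem hbt hwt).symm, hab⟩
  omega

end SimpleGraph

open SimpleGraph

theorem Degenerate.exists_isIndepSet_isAcyclic_induce_sdiff {V : Type*} [DecidableEq V]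
    {G : SimpleGraph V} [DecidableRel G.Adj] (hG : Degenerate 2 G) (s : Finset V) :
    ∃ I ⊆ (s : Set V), G.IsIndepSet I ∧ (G.induce (↑s \ I)).IsAcyclic := by
  induction s using Finset.strongInduction with | H s ih
  rcases s.eq_empty_or_nonempty with rfl | hne
  · exact ⟨∅, by simp, by simp,
      isAcyclic_induce_iff.mpr fun u c _ => ⟨u, c.start_mem_support, by simp⟩⟩
  obtain ⟨v, hvs, hv⟩ := hG s hne
  obtain ⟨I, hIs, hI, hF⟩ := ih _ (s.erase_ssubset hvs)
  have hvI : v ∉ I := fun h => by simpa using hIs h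
  by_cases hw : ∃ w ∈ I, G.Adj v w
  · obtain ⟨w, hwI, hvw⟩ := hw
    refine ⟨I, hIs.trans (by simp), hI, ?_⟩
    have hsplit : (↑s : Set V) \ I = insert v (↑(s.erase v) \ I) := by
      ext x; by_cases hx : x = v <;> simp [hx, hvs, hvI]
    rw [hsplit]
    refine isAcyclic_induce_insert hF (subsingleton_neighborSet_inter_of_card_le_two hv ?_
      (Finset.mem_of_mem_erase (hIs hwI)) (fun h => h.2 hwI) hvw)
    exact Set.sdiff_subset.trans (by simp)
  · push Not at hw
    refine ⟨insert v I, Set.insert_subset hvs (hIs.trans (by simp)), ?_, ?_⟩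
    · exact Set.pairwise_insert.mpr ⟨hI, fun b hb _ => ⟨hw b hb, fun h => hw b hb h.symm⟩⟩
    · have hsplit : (↑s : Set V) \ insert v I = ↑(s.erase v) \ I := by
        ext x; by_cases hx : x = v <;> simp [hx]
      rwa [hsplit]

/-- Every finite simple 2-degenerate graph is near-bipartite. -/
theorem two_degenerate_nearBipartite {V : Type*} [Fintype V] [DecidableEq V]
    (G : SimpleGraph V) [DecidableRel G.Adj] (h : Degenerate 2 G) :
    NearBipartite G := by
  obtain ⟨I, -, hI, hF⟩ := h.exists_isIndepSet_isAcyclic_induce_sdiff Finset.univ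
  refine ⟨I, fun u v hu hv huv => hI hu hv huv.ne huv, ?_⟩
  rwa [Finset.coe_univ, ← Set.compl_eq_univ_sdiff] at hF
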